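/- arXiv:2007.02782 — 3 statements merged into one kernel-verified Lean document; each statement's English description precedes it below -/
import Mathlib

section
/- Let p be a prime, ω ∈ ℂ a primitive p-th root of unity, A an m×n matrix over ℤ/p, b ∈ (ℤ/p)^m, and j ∈ {1,…,n}. If j ∈ V_i ∩ V_k for rows i,k, then in the game algebra 𝒜(syncLCS(A,b)) the elements ∑_{x∈S_i(A,b)} ω^{x_j} a_{i,x} and ∑_{y∈S_k(A,b)} ω^{y_j} a_{k,y} are equal. -/
set_option maxHeartbeats 1000000
noncomputable section

/-! ### The conjugate-linear star structure on a monoid algebra `ℂ[M]`,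
where `M` is a monoid with an (anti-multiplicative) star operation.
For a group `G` (with `star = ⁻¹`, see below) this is the usual star structure
`(λ·g)* = conj(λ)·g⁻¹` on the group `*`-algebra `ℂG`. -/

section MonoidAlgebraStar

variable {M : Type*} [Monoid M] [StarMul M]

/-- the star operation on `ℂ[M]`: `(λ·m)* = conj(λ)·(star m)` -/
noncomputable def mstar (f : MonoidAlgebra ℂ M) : MonoidAlgebra ℂ M :=
  MonoidAlgebra.ofCoeff (Finsupp.equivMapDomain ⟨star, star, star_involutive, star_involutive⟩
    (Finsupp.mapRange (starRingEnd ℂ) (map_zero _) f.coeff))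

lemma mstar_apply (f : MonoidAlgebra ℂ M) (x : M) :
    (mstar f).coeff x = starRingEnd ℂ (f.coeff (star x)) := rfl

lemma mstar_single (a : M) (c : ℂ) :
    mstar (MonoidAlgebra.single a c) = MonoidAlgebra.single (star a) (starRingEnd ℂ c) := by
  classical
  ext x
  show starRingEnd ℂ ((Finsupp.single a c) (star x)) =
    (Finsupp.single (star a) (starRingEnd ℂ c)) x
  simp only [Finsupp.single_apply]
  by_cases h : a = star x
  · rw [if_pos h, if_pos (by rw [h, star_star])]
  · rw [if_neg h, if_neg (fun h2 => h (by rw [← h2, star_star])), map_zero]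

lemma mstar_add (f g : MonoidAlgebra ℂ M) : mstar (f + g) = mstar f + mstar g := by
  ext x
  exact map_add (starRingEnd ℂ) (f.coeff (star x)) (g.coeff (star x))

lemma mstar_zero : mstar (0 : MonoidAlgebra ℂ M) = 0 := by
  ext x
  exact map_zero (starRingEnd ℂ)

lemma mstar_mul (f g : MonoidAlgebra ℂ M) : mstar (f * g) = mstar g * mstar f := by
  induction f using MonoidAlgebra.induction_linear with
  | zero =>
      exact (congrArg mstar (zero_mul g)).trans (mstar_zero.trans
        ((mul_zero (mstar g)).symm.trans (congrArg _ mstar_zero.symm)))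
  | add f1 f2 h1 h2 =>
      refine Eq.trans (congrArg mstar (@add_mul (MonoidAlgebra ℂ M) _ _ _ f1 f2 g)) ?_
      rw [mstar_add, h1, h2, ← mul_add]
      exact congrArg (mstar g * ·) (mstar_add f1 f2).symm
  | single a c =>
    induction g using MonoidAlgebra.induction_linear with
    | zero =>
        exact (congrArg mstar (mul_zero _)).trans (mstar_zero.trans
          ((zero_mul _).symm.trans (congrArg (· * _) mstar_zero.symm)))
    | add g1 g2 h1 h2 =>
        refine Eq.trans (congrArg mstar (@mul_add (MonoidAlgebra ℂ M) _ _ _ _ g1 g2)) ?_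
        rw [mstar_add, h1, h2, ← add_mul]
        exact congrArg (· * mstar (MonoidAlgebra.single a c)) (mstar_add g1 g2).symm
    | single b d =>
      show mstar ((MonoidAlgebra.single a c) * (MonoidAlgebra.single b d)) =
        mstar (MonoidAlgebra.single b d) * mstar (MonoidAlgebra.single a c)
      rw [MonoidAlgebra.single_mul_single, mstar_single, mstar_single, mstar_single,
        MonoidAlgebra.single_mul_single, star_mul, map_mul, mul_comm (starRingEnd ℂ d)]

/-- the `*`-ring structure of `ℂ[M]` -/
noncomputable instance instMAStar : StarRing (MonoidAlgebra ℂ M) where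
  star := mstar
  star_involutive f := by
    ext x
    calc (mstar (mstar f)).coeff x = starRingEnd ℂ (starRingEnd ℂ (f.coeff (star (star x)))) := rfl
      _ = f.coeff (star (star x)) := Complex.conj_conj _
      _ = f.coeff x := congrArg (fun y => f.coeff y) (star_star x)
  star_mul := mstar_mul
  star_add := mstar_add

lemma star_of' (a : M) :
    star (MonoidAlgebra.of ℂ M a) = MonoidAlgebra.of ℂ M (star a) := by
  show mstar _ = _
  rw [show (MonoidAlgebra.of ℂ M a : MonoidAlgebra ℂ M) = MonoidAlgebra.single a 1 from rfl,
    mstar_single, map_one]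
  rfl

end MonoidAlgebraStar

section LinearSystem

variable {p m n : ℕ}

/-- `V_i`, the support of the `i`-th row of `A` -/
def Vset (A : Matrix (Fin m) (Fin n) (ZMod p)) (i : Fin m) : Finset (Fin n) :=
  Finset.univ.filter fun j => A i j ≠ 0

/-- `S_i(A,b)`: solutions of the `i`-th equation supported inside `V_i` -/
def Ssol [NeZero p] (A : Matrix (Fin m) (Fin n) (ZMod p)) (b : Fin m → ZMod p) (i : Fin m) :
    Finset (Fin n → ZMod p) :=
  Finset.univ.filter fun x => (∑ j, A i j * x j) = b i ∧ ∀ j, x j ≠ 0 → j ∈ Vset A i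

/-- `(x,y)` are incompatible solutions for rows `(i,k)` -/
def Incompat (A : Matrix (Fin m) (Fin n) (ZMod p)) (i k : Fin m)
    (x y : Fin n → ZMod p) : Prop :=
  ∃ j ∈ Vset A i ∩ Vset A k, x j ≠ y j

lemma Incompat.symm {A : Matrix (Fin m) (Fin n) (ZMod p)} {i k : Fin m}
    {x y : Fin n → ZMod p} (h : Incompat A i k x y) : Incompat A k i y x := by
  obtain ⟨j, hj, hne⟩ := h
  exact ⟨j, by simpa [Finset.mem_inter, and_comm] using hj, hne.symm⟩

end LinearSystem

section GameAlgebra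

variable {p m n : ℕ}

/-- the index set of the generators `a_{i,x}` of the game algebra: pairs `(i, x)` with
`x ∈ S_i(A,b)` -/
abbrev SyncGen [NeZero p] (A : Matrix (Fin m) (Fin n) (ZMod p)) (b : Fin m → ZMod p) : Type _ :=
  Σ i : Fin m, {x : Fin n → ZMod p // x ∈ Ssol A b i}

/-- the free unital complex `*`-algebra on a set `X` of self-adjoint generators -/
abbrev FreeStarAlg (X : Type*) := MonoidAlgebra ℂ (FreeMonoid X)

/-- a generator of the free `*`-algebra -/
noncomputable def Xg {X : Type*} (x : X) : FreeStarAlg X :=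
  MonoidAlgebra.of ℂ (FreeMonoid X) (FreeMonoid.of x)

lemma starX {X : Type*} (x : X) : star (Xg x) = Xg x := by
  rw [Xg, star_of', FreeMonoid.star_of]

/-- the defining relations of the game algebra `𝒜(syncLCS(A,b))`: the generators are
self-adjoint (automatic here) idempotents, for each row the generators sum to one, and
incompatible pairs are orthogonal. -/
inductive SyncRel [NeZero p] (A : Matrix (Fin m) (Fin n) (ZMod p)) (b : Fin m → ZMod p) :
    FreeStarAlg (SyncGen A b) → FreeStarAlg (SyncGen A b) → Prop
  | idem (g : SyncGen A b) : SyncRel A b (Xg g * Xg g) (Xg g)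
  | sum_one (i : Fin m) :
      SyncRel A b (∑ x ∈ (Ssol A b i).attach, Xg (⟨i, x⟩ : SyncGen A b)) 1
  | orth {i k : Fin m} (x : {x // x ∈ Ssol A b i}) (y : {y // y ∈ Ssol A b k})
      (h : Incompat A i k x.1 y.1) :
      SyncRel A b (Xg (⟨i, x⟩ : SyncGen A b) * Xg (⟨k, y⟩ : SyncGen A b)) 0

lemma SyncRel.star_closed [NeZero p] (A : Matrix (Fin m) (Fin n) (ZMod p)) (b : Fin m → ZMod p) :
    ∀ a c, SyncRel A b a c → SyncRel A b (star a) (star c) := by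
  intro a c h
  cases h with
  | idem g => rw [star_mul, starX]; exact SyncRel.idem g
  | sum_one i =>
      rw [star_sum, star_one]
      simp only [starX]
      exact SyncRel.sum_one i
  | orth x y h =>
      rw [star_mul, starX, starX, star_zero]
      exact SyncRel.orth y x h.symm

/-- The game algebra `𝒜(syncLCS(A,b))`: the quotient of the free `*`-algebra on the
generators `a_{i,x}` by the `*`-ideal generated by the game relations. -/
abbrev GameAlg [NeZero p] (A : Matrix (Fin m) (Fin n) (ZMod p)) (b : Fin m → ZMod p) :=
  RingQuot (SyncRel A b)

noncomputable instance [NeZero p] (A : Matrix (Fin m) (Fin n) (ZMod p)) (b : Fin m → ZMod p) :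
    StarRing (GameAlg A b) :=
  RingQuot.starRing _ (SyncRel.star_closed A b)

/-- the generator `a_{i,x}` of the game algebra `𝒜(syncLCS(A,b))` -/
noncomputable def agen [NeZero p] (A : Matrix (Fin m) (Fin n) (ZMod p)) (b : Fin m → ZMod p)
    (i : Fin m) (x : Fin n → ZMod p) (hx : x ∈ Ssol A b i) : GameAlg A b :=
  RingQuot.mkAlgHom ℂ (SyncRel A b) (Xg ⟨i, ⟨x, hx⟩⟩)

end GameAlgebra

/- Multiply the left side by `∑ f y = 1` and the right side by `∑ e x = 1`; the resulting double
sums agree term by term, since a term `e x * f y` with `c x ≠ d y` vanishes. -/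
theorem Finset.sum_smul_eq_sum_smul_of_mul_eq_zero {R A ι κ : Type*} [CommSemiring R]
    [Semiring A] [Algebra R A] {s : Finset ι} {t : Finset κ} {e : ι → A} {f : κ → A}
    {c : ι → R} {d : κ → R} (he : ∑ x ∈ s, e x = 1) (hf : ∑ y ∈ t, f y = 1)
    (horth : ∀ x ∈ s, ∀ y ∈ t, c x ≠ d y → e x * f y = 0) :
    ∑ x ∈ s, c x • e x = ∑ y ∈ t, d y • f y := by
  have hterm : ∀ x ∈ s, ∀ y ∈ t, c x • (e x * f y) = d y • (e x * f y) := by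
    intro x hx y hy
    by_cases hcd : c x = d y
    · rw [hcd]
    · rw [horth x hx y hy hcd, smul_zero, smul_zero]
  calc ∑ x ∈ s, c x • e x
      = (∑ x ∈ s, c x • e x) * ∑ y ∈ t, f y := by rw [hf, mul_one]
    _ = ∑ x ∈ s, ∑ y ∈ t, c x • (e x * f y) := by
        simp only [Finset.sum_mul_sum, smul_mul_assoc]
    _ = ∑ x ∈ s, ∑ y ∈ t, d y • (e x * f y) :=
        Finset.sum_congr rfl fun x hx => Finset.sum_congr rfl fun y hy => hterm x hx y hy
    _ = (∑ x ∈ s, e x) * ∑ y ∈ t, d y • f y := by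
        simp only [Finset.sum_mul_sum, mul_smul_comm]
    _ = ∑ y ∈ t, d y • f y := by rw [he, one_mul]

section GameAlgebra

variable {p m n : ℕ} [NeZero p] (A : Matrix (Fin m) (Fin n) (ZMod p)) (b : Fin m → ZMod p)

theorem agen_sum_eq_one (i : Fin m) : ∑ x ∈ (Ssol A b i).attach, agen A b i x.1 x.2 = 1 := by
  simpa only [agen, map_sum, map_one] using
    RingQuot.mkAlgHom_rel ℂ (SyncRel.sum_one (A := A) (b := b) i)

theorem agen_mul_agen_eq_zero {i k : Fin m} {x y : Fin n → ZMod p} (hx : x ∈ Ssol A b i)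
    (hy : y ∈ Ssol A b k) (h : Incompat A i k x y) : agen A b i x hx * agen A b k y hy = 0 := by
  simpa only [agen, map_mul, map_zero] using
    RingQuot.mkAlgHom_rel ℂ (SyncRel.orth (A := A) (b := b) ⟨x, hx⟩ ⟨y, hy⟩ h)

end GameAlgebra

theorem statement3_general (p : ℕ) [Fact p.Prime] {m n : ℕ} (ω : ℂ)
    (A : Matrix (Fin m) (Fin n) (ZMod p)) (b : Fin m → ZMod p)
    (j : Fin n) (i k : Fin m) (hi : j ∈ Vset A i) (hk : j ∈ Vset A k) :
    ∑ x ∈ (Ssol A b i).attach, (ω ^ ((x.1 j).val) : ℂ) • agen A b i x.1 x.2 =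
    ∑ y ∈ (Ssol A b k).attach, (ω ^ ((y.1 j).val) : ℂ) • agen A b k y.1 y.2 := by
  refine Finset.sum_smul_eq_sum_smul_of_mul_eq_zero (agen_sum_eq_one A b i)
    (agen_sum_eq_one A b k) fun x _ y _ hne => agen_mul_agen_eq_zero A b x.2 y.2 ?_
  exact ⟨j, Finset.mem_inter.mpr ⟨hi, hk⟩, fun hxy => hne (by rw [hxy])⟩

/-- If `j ∈ V_i ∩ V_k` then `∑_{x ∈ S_i} ω^{x_j} a_{i,x} =
∑_{y ∈ S_k} ω^{y_j} a_{k,y}` in the game algebra `𝒜(syncLCS(A,b))`. -/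
theorem statement3 (p : ℕ) [Fact p.Prime] {m n : ℕ} (ω : ℂ) (hω : IsPrimitiveRoot ω p)
    (A : Matrix (Fin m) (Fin n) (ZMod p)) (b : Fin m → ZMod p)
    (j : Fin n) (i k : Fin m) (hi : j ∈ Vset A i) (hk : j ∈ Vset A k) :
    ∑ x ∈ (Ssol A b i).attach, (ω ^ ((x.1 j).val) : ℂ) • agen A b i x.1 x.2 =
    ∑ y ∈ (Ssol A b k).attach, (ω ^ ((y.1 j).val) : ℂ) • agen A b k y.1 y.2 :=
  statement3_general p ω A b j i k hi hk

end
end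

section
/- Let p be a prime, ω ∈ ℂ a primitive p-th root of unity, a ∈ (ℤ/p)^n a nonzero vector with support V := supp(a), c ∈ ℤ/p, and S := {x ∈ (ℤ/p)^n : a·x = c and supp(x) ⊆ V}. Let (λ_t)_{t∈ℤ/p} be a partition of V indexed by ℤ/p (with blocks allowed to be empty) having at least two nonempty blocks. Then ∑_{x∈S} ω^{−∑_{t∈ℤ/p} t·(∑_{j∈λ_t} a_j x_j)} = 0, where in the exponent t·(∑_{j∈λ_t} a_j x_j) is computed in ℤ/p using integer representatives t ∈ {0,…,p−1}. -/
noncomputable section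

/-- the solution set `S = {x : a·x = c and supp(x) ⊆ supp(a)}` of a single linear equation -/
def rowSols {p n : ℕ} [NeZero p] (a : Fin n → ZMod p) (c : ZMod p) :
    Finset (Fin n → ZMod p) :=
  Finset.univ.filter fun x => (∑ j, a j * x j) = c ∧ ∀ j, x j ≠ 0 → a j ≠ 0

/-!
Write `F x = ∑_t t·(∑_{j∈λ_t} a_j x_j)`, an additive map, so the summand is the additive character
`ψ(-F x)` with `ψ(z) = ω^z`. Pick `i ∈ λ_s`, `j ∈ λ_t` with `s ≠ t` and put
`u = a_i⁻¹ e_i - a_j⁻¹ e_j`. Then `a·u = 0` and `supp u ⊆ V`, so `S` is invariant under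
translation by `u`, while `F u = s - t ≠ 0`. Translating the sum by `u` multiplies it by
`ψ(-F u) ≠ 1`, so it vanishes.
-/

open Finset Function

theorem AddChar.sum_eq_zero_of_add_mem_iff {G R : Type*} [AddGroup G] [CommRing R]
    [NoZeroDivisors R] (ψ : AddChar G R) {S : Finset G} {u : G}
    (hS : ∀ x, x + u ∈ S ↔ x ∈ S) (hu : ψ u ≠ 1) : ∑ x ∈ S, ψ x = 0 := by
  have htranslate : ∑ x ∈ S, ψ x = (∑ x ∈ S, ψ x) * ψ u := by
    calc ∑ x ∈ S, ψ x = ∑ x ∈ S, ψ (x + u) :=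
          (sum_equiv (Equiv.addRight u) (fun x => (hS x).symm) fun _ _ => rfl).symm
      _ = (∑ x ∈ S, ψ x) * ψ u := by simp only [AddChar.map_add_eq_mul, sum_mul]
  have : (∑ x ∈ S, ψ x) * (ψ u - 1) = 0 := by linear_combination -htranslate
  exact (mul_eq_zero.mp this).resolve_right (sub_ne_zero.mpr hu)

theorem add_mem_rowSols_iff {p n : ℕ} [NeZero p] {a u : Fin n → ZMod p} (c : ZMod p)
    (hau : a ⬝ᵥ u = 0) (hsupp : ∀ j, a j = 0 → u j = 0) (x : Fin n → ZMod p) :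
    x + u ∈ rowSols a c ↔ x ∈ rowSols a c := by
  have hdot : a ⬝ᵥ (x + u) = a ⬝ᵥ x := by rw [dotProduct_add, hau, add_zero]
  have hsupp' : ∀ j, ((x + u) j ≠ 0 → a j ≠ 0) ↔ (x j ≠ 0 → a j ≠ 0) := by
    intro j
    by_cases hj : a j = 0 <;> simp [hj, hsupp]
  simp only [rowSols, mem_filter, mem_univ, true_and]
  exact and_congr (Iff.of_eq (congrArg (· = c) hdot)) (forall_congr' hsupp')

section BlockForm

variable {R ι : Type*} [CommRing R] [Fintype R]

def blockForm (a : ι → R) (lam : R → Finset ι) : (ι → R) →+ R :=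
  AddMonoidHom.mk' (fun x => ∑ t, t * ∑ j ∈ lam t, a j * x j) fun x y => by
    simp only [Pi.add_apply, mul_add, sum_add_distrib]

theorem blockForm_apply (a : ι → R) (lam : R → Finset ι) (x : ι → R) :
    blockForm a lam x = ∑ t, t * ∑ j ∈ lam t, a j * x j :=
  rfl

theorem blockForm_single [DecidableEq ι] {a : ι → R} {lam : R → Finset ι}
    (hdisj : Pairwise (Disjoint on lam)) {s : R} {j : ι} (hj : j ∈ lam s) (b : R) :
    blockForm a lam (Pi.single j b) = s * (a j * b) := by
  have hblock : ∀ t,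
      ∑ i ∈ lam t, a i * (Pi.single j b : ι → R) i = if j ∈ lam t then a j * b else 0 := by
    intro t
    simp only [Pi.single_apply, mul_ite, mul_zero, sum_ite_eq']
  rw [blockForm_apply, sum_eq_single s (fun t _ hts => ?_) (by simp), hblock, if_pos hj]
  rw [hblock, if_neg (disjoint_left.mp (hdisj hts.symm) hj), mul_zero]

end BlockForm

section TestVector

variable {K ι : Type*} [Field K] [DecidableEq ι] {a : ι → K} {i j : ι}

theorem dotProduct_single_inv_sub_single_inv [Fintype ι] (hi : a i ≠ 0) (hj : a j ≠ 0) :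
    a ⬝ᵥ (Pi.single i (a i)⁻¹ - Pi.single j (a j)⁻¹) = 0 := by
  rw [dotProduct_sub, dotProduct_single, dotProduct_single, mul_inv_cancel₀ hi,
    mul_inv_cancel₀ hj, sub_self]

theorem single_inv_sub_single_inv_eq_zero_of_eq_zero (hi : a i ≠ 0) (hj : a j ≠ 0) {k : ι}
    (hk : a k = 0) : (Pi.single i (a i)⁻¹ - Pi.single j (a j)⁻¹ : ι → K) k = 0 := by
  have hki : k ≠ i := by rintro rfl; exact hi hk
  have hkj : k ≠ j := by rintro rfl; exact hj hk
  simp [hki, hkj]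

theorem blockForm_single_inv_sub_single_inv [Fintype K] {lam : K → Finset ι}
    (hdisj : Pairwise (Disjoint on lam)) {s t : K} (hi : i ∈ lam s) (hj : j ∈ lam t)
    (hai : a i ≠ 0) (haj : a j ≠ 0) :
    blockForm a lam (Pi.single i (a i)⁻¹ - Pi.single j (a j)⁻¹) = s - t := by
  rw [map_sub, blockForm_single hdisj hi, blockForm_single hdisj hj, mul_inv_cancel₀ hai,
    mul_inv_cancel₀ haj, mul_one, mul_one]

end TestVector

theorem statement13_general (p : ℕ) [Fact p.Prime] {n : ℕ} (ω : ℂ) (hω : IsPrimitiveRoot ω p)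
    (a : Fin n → ZMod p) (c : ZMod p)
    (lam : ZMod p → Finset (Fin n))
    (hdisj : ∀ s t : ZMod p, s ≠ t → Disjoint (lam s) (lam t))
    (hcover : Finset.univ.biUnion lam = Finset.univ.filter fun j => a j ≠ 0)
    (htwo : ∃ s t : ZMod p, s ≠ t ∧ (lam s).Nonempty ∧ (lam t).Nonempty) :
    ∑ x ∈ rowSols a c, (ω ^ (((- ∑ t : ZMod p, t * ∑ j ∈ lam t, a j * x j)).val) : ℂ) = 0 := by
  obtain ⟨s, t, hst, ⟨i, hi⟩, ⟨j, hj⟩⟩ := htwo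
  have hsupp : ∀ r, ∀ k ∈ lam r, a k ≠ 0 := fun r k hk => by
    have : k ∈ univ.biUnion lam := mem_biUnion.mpr ⟨r, mem_univ r, hk⟩
    simpa [hcover] using this
  have hai := hsupp s i hi
  have haj := hsupp t j hj
  let ψ := (AddChar.zmodChar p hω.pow_eq_one).compAddMonoidHom (-blockForm a lam)
  have hψu : ψ (Pi.single i (a i)⁻¹ - Pi.single j (a j)⁻¹) ≠ 1 := by
    rw [AddChar.compAddMonoidHom_apply, Ne,
      (AddChar.zmodChar_primitive_of_primitive_root p hω).zmod_char_eq_one_iff,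
      AddMonoidHom.neg_apply,
      blockForm_single_inv_sub_single_inv (fun s t hst => hdisj s t hst) hi hj hai haj,
      neg_eq_zero, sub_eq_zero]
    exact hst
  exact ψ.sum_eq_zero_of_add_mem_iff
    (add_mem_rowSols_iff c (dotProduct_single_inv_sub_single_inv hai haj)
      (fun _ => single_inv_sub_single_inv_eq_zero_of_eq_zero hai haj)) hψu

/-- For a partition `(λ_t)_{t ∈ ℤ/p}` of `V = supp(a)` with at least two
nonempty blocks, `∑_{x ∈ S} ω^{-∑_t t·(∑_{j ∈ λ_t} a_j x_j)} = 0`. -/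
theorem statement13 (p : ℕ) [Fact p.Prime] {n : ℕ} (ω : ℂ) (hω : IsPrimitiveRoot ω p)
    (a : Fin n → ZMod p) (ha : a ≠ 0) (c : ZMod p)
    (lam : ZMod p → Finset (Fin n))
    (hdisj : ∀ s t : ZMod p, s ≠ t → Disjoint (lam s) (lam t))
    (hcover : Finset.univ.biUnion lam = Finset.univ.filter fun j => a j ≠ 0)
    (htwo : ∃ s t : ZMod p, s ≠ t ∧ (lam s).Nonempty ∧ (lam t).Nonempty) :
    ∑ x ∈ rowSols a c, (ω ^ (((- ∑ t : ZMod p, t * ∑ j ∈ lam t, a j * x j)).val) : ℂ) = 0 :=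
  statement13_general p ω hω a c lam hdisj hcover htwo

end
end

section
/- Let p be a prime, A an m×n matrix over ℤ/p and b ∈ (ℤ/p)^m, and assume the game algebra 𝒜(Iso(G_{A,b}, G_{A,0})) is hereditary (i.e., ∑_{i=1}^N x_i* x_i = 0 implies each x_i = 0). Then there exists a unital *-algebra homomorphism ψ : 𝒜(syncLCS(A,b)) → 𝒜(Iso(G_{A,b}, G_{A,0})) sending a_{i,x} to ∑_{k=1}^m e_{(i,x),(k,0)}, where e_{(i,x),(k,0)} is the generator corresponding to input vertex (i,x) of G_{A,b} and output vertex (k,0) of G_{A,0}. -/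
set_option maxHeartbeats 1000000
noncomputable section

section IsoGame

variable {p m n : ℕ}

/-- the graph `G_{A,b}`: vertices are pairs `(i,x)` with `x ∈ S_i(A,b)`, and two vertices
are adjacent iff they are incompatible solutions -/
def lsGraph [NeZero p] (A : Matrix (Fin m) (Fin n) (ZMod p)) (b : Fin m → ZMod p) :
    SimpleGraph (SyncGen A b) where
  Adj v w := Incompat A v.1 w.1 v.2.1 w.2.1
  symm := ⟨fun _ _ h => h.symm⟩
  loopless := ⟨fun v h => by obtain ⟨j, _, hne⟩ := h; exact hne rfl⟩

/-- the rule predicate of the graph isomorphism game `Iso(G,H)`: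
`IsoWin G H v w x y` holds iff on inputs `(v,w)` the answers `(x,y)` win, i.e.
`v,x` are in different graphs, `w,y` are in different graphs, and if `v,w` are in the
same graph then their relationship (equal / adjacent / distinct non-adjacent) is
satisfied by `x,y` as well. -/
def IsoWin {VG VH : Type*} (G : SimpleGraph VG) (H : SimpleGraph VH) :
    VG ⊕ VH → VG ⊕ VH → VG ⊕ VH → VG ⊕ VH → Prop
  | Sum.inl v, Sum.inl w, Sum.inr x, Sum.inr y => (v = w ↔ x = y) ∧ (G.Adj v w ↔ H.Adj x y)
  | Sum.inl _, Sum.inr _, Sum.inr _, Sum.inl _ => True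
  | Sum.inr _, Sum.inl _, Sum.inl _, Sum.inr _ => True
  | Sum.inr v, Sum.inr w, Sum.inl x, Sum.inl y => (v = w ↔ x = y) ∧ (H.Adj v w ↔ G.Adj x y)
  | _, _, _, _ => False

/-- the defining relations of the game algebra `𝒜(Iso(G,H))`: the generators
`e_{v,x}` (for an input `v` and an output `x`) are self-adjoint (automatic here)
idempotents, for every input the generators sum to one over all outputs, and losing
pairs are orthogonal (the relation set is closed under `*`). -/
inductive IsoRel {VG VH : Type*} [Fintype VG] [Fintype VH]
    (G : SimpleGraph VG) (H : SimpleGraph VH) :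
    FreeStarAlg ((VG ⊕ VH) × (VG ⊕ VH)) → FreeStarAlg ((VG ⊕ VH) × (VG ⊕ VH)) → Prop
  | idem (g : (VG ⊕ VH) × (VG ⊕ VH)) : IsoRel G H (Xg g * Xg g) (Xg g)
  | sum_one (v : VG ⊕ VH) : IsoRel G H (∑ x : VG ⊕ VH, Xg (v, x)) 1
  | orth {v w x y : VG ⊕ VH} (h : ¬ IsoWin G H v w x y) :
      IsoRel G H (Xg (v, x) * Xg (w, y)) 0
  | orth' {v w x y : VG ⊕ VH} (h : ¬ IsoWin G H v w x y) :
      IsoRel G H (Xg (w, y) * Xg (v, x)) 0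

lemma IsoRel.star_closed {VG VH : Type*} [Fintype VG] [Fintype VH]
    (G : SimpleGraph VG) (H : SimpleGraph VH) :
    ∀ a c, IsoRel G H a c → IsoRel G H (star a) (star c) := by
  intro a c h
  cases h with
  | idem g => rw [star_mul, starX]; exact IsoRel.idem g
  | sum_one v =>
      rw [star_sum, star_one]
      simp only [starX]
      exact IsoRel.sum_one v
  | orth h => rw [star_mul, starX, starX, star_zero]; exact IsoRel.orth' h
  | orth' h => rw [star_mul, starX, starX, star_zero]; exact IsoRel.orth h

/-- The game algebra `𝒜(Iso(G,H))` of the graph isomorphism game. -/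
abbrev IsoAlg {VG VH : Type*} [Fintype VG] [Fintype VH]
    (G : SimpleGraph VG) (H : SimpleGraph VH) :=
  RingQuot (IsoRel G H)

noncomputable instance {VG VH : Type*} [Fintype VG] [Fintype VH]
    (G : SimpleGraph VG) (H : SimpleGraph VH) : StarRing (IsoAlg G H) :=
  RingQuot.starRing _ (IsoRel.star_closed G H)

/-- the generator `e_{v,x}` of `𝒜(Iso(G,H))` for input `v` and output `x` -/
noncomputable def egen {VG VH : Type*} [Fintype VG] [Fintype VH]
    (G : SimpleGraph VG) (H : SimpleGraph VH) (v x : VG ⊕ VH) : IsoAlg G H :=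
  RingQuot.mkAlgHom ℂ (IsoRel G H) (Xg (v, x))

/-- `(i, 0)` is a vertex of `G_{A,0}` -/
lemma zero_mem_Ssol [NeZero p] (A : Matrix (Fin m) (Fin n) (ZMod p)) (k : Fin m) :
    (0 : Fin n → ZMod p) ∈ Ssol A (0 : Fin m → ZMod p) k := by
  simp [Ssol]

end IsoGame

/-!
`ψ` comes from the universal property of `𝒜(syncLCS(A,b))`, so it suffices to check that the
elements `P_{i,x} = ∑ₖ e_{(i,x),(k,0)}` satisfy its relations. They are projections, because
generators with the same input and distinct outputs are orthogonal, and `P_{i,x} P_{j,y} = 0`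
for incompatible `(i,x), (j,y)`: these are adjacent in `G_{A,b}`, while the vertices `(k,0)` of
`G_{A,0}` are pairwise non-adjacent.

The relation `∑_{x ∈ S_i} P_{i,x} = 1` is where heredity enters, twice, through the remark that
projections `q₁, …, q_N` with `∑ qⱼ = N` are all `1` (as `∑ (1 - qⱼ)* (1 - qⱼ) = 0`). Applied to
the column sums `∑ᵥ e_{v,y}`, whose total is that of the row sums, it shows that the column sums
are `1`; applied to the projections `Qᵢ = ∑_{x ∈ S_i} P_{i,x}`, whose total is
`∑ₖ ∑_{g ∈ G_{A,b}} e_{g,(k,0)} = m`, it gives `Qᵢ = 1`.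
-/

instance {M : Type*} [Monoid M] [StarMul M] : StarModule ℂ (MonoidAlgebra ℂ M) where
  star_smul c f := by
    ext x
    exact map_mul (starRingEnd ℂ) c (f.coeff (star x))

namespace RingQuot

variable {S A : Type*} [CommSemiring S] [Semiring A] [Algebra S A] [StarRing A]
  {r : A → A → Prop} (hr : ∀ a b, r a b → r (star a) (star b))

theorem star_mkAlgHom (a : A) :
    letI := starRing r hr
    star (mkAlgHom S r a) = mkAlgHom S r (star a) := by
  rw [mkAlgHom_def, AlgHom.coe_mk, mkRingHom_def]
  rfl

theorem starModule [Star S] [StarModule S A] :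
    letI := starRing r hr
    StarModule S (RingQuot r) := by
  let := starRing r hr
  refine ⟨fun c x => ?_⟩
  obtain ⟨a, rfl⟩ := mkAlgHom_surjective S r x
  rw [← map_smul, star_mkAlgHom hr, star_mkAlgHom hr, star_smul, map_smul]

end RingQuot


section FreeStarAlgLift

variable {B : Type*} [Semiring B] [StarRing B] [Algebra ℂ B] [StarModule ℂ B]

theorem MonoidAlgebra.lift_star {M : Type*} [Monoid M] [StarMul M] {F : M →* B}
    (hF : ∀ w, F (star w) = star (F w)) (a : MonoidAlgebra ℂ M) :
    MonoidAlgebra.lift ℂ B M F (star a) = star (MonoidAlgebra.lift ℂ B M F a) := by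
  induction a using MonoidAlgebra.induction_linear with
  | zero => simp
  | add a a' ha ha' => rw [star_add, map_add, map_add, star_add, ha, ha']
  | single w c =>
    change MonoidAlgebra.lift ℂ B M F (mstar _) = _
    rw [mstar_single, MonoidAlgebra.lift_single, MonoidAlgebra.lift_single, star_smul, hF]
    rfl

theorem FreeMonoid.lift_star {X M : Type*} [Monoid M] [StarMul M] {f : X → M}
    (hf : ∀ x, IsSelfAdjoint (f x)) (w : FreeMonoid X) :
    FreeMonoid.lift f (star w) = star (FreeMonoid.lift f w) := by
  induction w using FreeMonoid.recOn with
  | one => simp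
  | of_mul x w ih =>
    rw [star_mul, FreeMonoid.star_of, map_mul, map_mul, FreeMonoid.lift_eval_of, ih, star_mul,
      (hf x).star_eq]

variable {X : Type*}

def FreeStarAlg.lift (f : X → B) (hf : ∀ x, IsSelfAdjoint (f x)) : FreeStarAlg X →⋆ₐ[ℂ] B where
  toAlgHom := MonoidAlgebra.lift ℂ B (FreeMonoid X) (FreeMonoid.lift f)
  map_star' := MonoidAlgebra.lift_star (FreeMonoid.lift_star hf)

theorem FreeStarAlg.lift_Xg (f : X → B) (hf : ∀ x, IsSelfAdjoint (f x)) (x : X) :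
    FreeStarAlg.lift f hf (Xg x) = f x := by
  simp [FreeStarAlg.lift, Xg]

end FreeStarAlgLift

section Hereditary

def IsHereditary (R : Type*) [NonUnitalNonAssocSemiring R] [Star R] : Prop :=
  ∀ (N : ℕ) (xs : Fin N → R), ∑ i, star (xs i) * xs i = 0 → ∀ i, xs i = 0

variable {R : Type*}

theorem IsHereditary.eq_zero_of_sum_star_mul_self_eq_zero [NonUnitalNonAssocSemiring R] [Star R]
    (hR : IsHereditary R) {ι : Type*} [Fintype ι] (x : ι → R) (hx : ∑ i, star (x i) * x i = 0)
    (i : ι) : x i = 0 := by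
  let e := Fintype.equivFin ι
  have h := hR _ (fun k => x (e.symm k)) (by rwa [e.symm.sum_comp (fun j => star (x j) * x j)])
  simpa using h (e i)

variable [Ring R] [StarRing R]

theorem IsStarProjection.finsetSum {ι : Type*} {s : Finset ι} {q : ι → R}
    (hq : ∀ i ∈ s, IsStarProjection (q i))
    (horth : ∀ i ∈ s, ∀ j ∈ s, i ≠ j → q i * q j = 0) :
    IsStarProjection (∑ i ∈ s, q i) := by
  classical
  induction s using Finset.induction_on with
  | empty => simp
  | insert a s ha ih =>
    rw [Finset.sum_insert ha]
    refine (hq a (s.mem_insert_self a)).add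
      (ih (fun i hi => hq i (Finset.mem_insert_of_mem hi))
        (fun i hi j hj => horth i (Finset.mem_insert_of_mem hi) j (Finset.mem_insert_of_mem hj)))
      ?_
    rw [Finset.mul_sum]
    exact Finset.sum_eq_zero fun j hj =>
      horth a (s.mem_insert_self a) j (Finset.mem_insert_of_mem hj) (by rintro rfl; exact ha hj)

theorem IsHereditary.eq_one_of_sum_eq_card (hR : IsHereditary R) {ι : Type*} [Fintype ι]
    {q : ι → R} (hq : ∀ i, IsStarProjection (q i)) (hsum : ∑ i, q i = ∑ _i : ι, 1) (i : ι) :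
    q i = 1 := by
  have hcompl (j : ι) : star (1 - q j) * (1 - q j) = 1 - q j := by
    rw [(hq j).one_sub.isSelfAdjoint.star_eq, (hq j).one_sub.isIdempotentElem.eq]
  refine (sub_eq_zero.mp (hR.eq_zero_of_sum_star_mul_self_eq_zero (fun j => 1 - q j) ?_ i)).symm
  rw [Finset.sum_congr rfl fun j _ => hcompl j, Finset.sum_sub_distrib, hsum, sub_self]

end Hereditary

section GameAlgLift

variable {p m n : ℕ} [NeZero p] {A : Matrix (Fin m) (Fin n) (ZMod p)} {b : Fin m → ZMod p}
  {B : Type*} [Semiring B] [StarRing B] [Algebra ℂ B] [StarModule ℂ B]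

def GameAlg.lift (f : SyncGen A b → B) (hf : ∀ g, IsStarProjection (f g))
    (hsum : ∀ i, ∑ x ∈ (Ssol A b i).attach, f ⟨i, x⟩ = 1)
    (horth : ∀ g g' : SyncGen A b, Incompat A g.1 g'.1 g.2.1 g'.2.1 → f g * f g' = 0) :
    GameAlg A b →⋆ₐ[ℂ] B :=
  let φ := FreeStarAlg.lift f fun g => (hf g).isSelfAdjoint
  have hrel : ∀ u v, SyncRel A b u v → φ u = φ v := by
    intro u v h
    cases h with
    | idem g => rw [map_mul, FreeStarAlg.lift_Xg, (hf g).isIdempotentElem.eq]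
    | sum_one i => simp only [map_sum, map_one, φ, FreeStarAlg.lift_Xg, hsum]
    | orth x y h => rw [map_mul, map_zero, FreeStarAlg.lift_Xg, FreeStarAlg.lift_Xg, horth _ _ h]
  { toAlgHom := RingQuot.liftAlgHom ℂ ⟨φ.toAlgHom, hrel⟩
    map_star' := by
      intro a
      obtain ⟨a, rfl⟩ := RingQuot.mkAlgHom_surjective ℂ (SyncRel A b) a
      rw [RingQuot.star_mkAlgHom (SyncRel.star_closed A b)]
      exact (RingQuot.liftAlgHom_mkAlgHom_apply ℂ _ hrel _).trans <| (map_star φ a).trans <|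
        congrArg star (RingQuot.liftAlgHom_mkAlgHom_apply ℂ _ hrel a).symm }

theorem GameAlg.lift_agen (f : SyncGen A b → B) (hf : ∀ g, IsStarProjection (f g))
    (hsum : ∀ i, ∑ x ∈ (Ssol A b i).attach, f ⟨i, x⟩ = 1)
    (horth : ∀ g g' : SyncGen A b, Incompat A g.1 g'.1 g.2.1 g'.2.1 → f g * f g' = 0)
    (i : Fin m) (x : Fin n → ZMod p) (hx : x ∈ Ssol A b i) :
    GameAlg.lift f hf hsum horth (agen A b i x hx) = f ⟨i, ⟨x, hx⟩⟩ := by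
  simp [GameAlg.lift, agen, FreeStarAlg.lift_Xg]

end GameAlgLift

section IsoAlgGenerators

variable {VG VH : Type*} [Fintype VG] [Fintype VH] (G : SimpleGraph VG) (H : SimpleGraph VH)

instance : StarModule ℂ (IsoAlg G H) := RingQuot.starModule (IsoRel.star_closed G H)

theorem egen_isStarProjection (v x : VG ⊕ VH) : IsStarProjection (egen G H v x) where
  isIdempotentElem := by
    rw [IsIdempotentElem, egen, ← map_mul]
    exact RingQuot.mkAlgHom_rel ℂ (IsoRel.idem (v, x))
  isSelfAdjoint := by
    rw [IsSelfAdjoint, egen, RingQuot.star_mkAlgHom (IsoRel.star_closed G H), starX]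

variable {G H}

theorem egen_mul_egen_of_not_isoWin {v w x y : VG ⊕ VH} (h : ¬ IsoWin G H v w x y) :
    egen G H v x * egen G H w y = 0 := by
  rw [egen, egen, ← map_mul, RingQuot.mkAlgHom_rel ℂ (IsoRel.orth h), map_zero]

theorem egen_mul_egen_of_ne_input {v w : VG ⊕ VH} (y : VG ⊕ VH) (hvw : v ≠ w) :
    egen G H v y * egen G H w y = 0 := by
  refine egen_mul_egen_of_not_isoWin ?_
  rcases v with v | v <;> rcases w with w | w <;> rcases y with y | y <;> simp_all [IsoWin]

theorem egen_mul_egen_of_ne_output (v : VG ⊕ VH) {x y : VG ⊕ VH} (hxy : x ≠ y) :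
    egen G H v x * egen G H v y = 0 := by
  refine egen_mul_egen_of_not_isoWin ?_
  rcases v with v | v <;> rcases x with x | x <;> rcases y with y | y <;> simp_all [IsoWin]

theorem egen_inr_inr (v w : VH) : egen G H (Sum.inr v) (Sum.inr w) = 0 := by
  rw [← (egen_isStarProjection G H _ _).isIdempotentElem.eq]
  exact egen_mul_egen_of_not_isoWin (by simp [IsoWin])

variable (G H)

theorem sum_egen_output (v : VG ⊕ VH) : ∑ x, egen G H v x = 1 := by
  simp only [egen, ← map_sum]
  rw [RingQuot.mkAlgHom_rel ℂ (IsoRel.sum_one v), map_one]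

theorem sum_egen_input (hered : IsHereditary (IsoAlg G H)) (y : VG ⊕ VH) :
    ∑ v, egen G H v y = 1 := by
  refine hered.eq_one_of_sum_eq_card (q := fun y => ∑ v, egen G H v y) (fun y => ?_) ?_ y
  · exact IsStarProjection.finsetSum (fun v _ => egen_isStarProjection G H v y)
      fun v _ w _ hvw => egen_mul_egen_of_ne_input y hvw
  · rw [Finset.sum_comm]
    exact Finset.sum_congr rfl fun v _ => sum_egen_output G H v

end IsoAlgGenerators

section LinearSystemGraph

variable {p m n : ℕ} {A : Matrix (Fin m) (Fin n) (ZMod p)}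

theorem not_incompat_self (i k : Fin m) (x : Fin n → ZMod p) : ¬ Incompat A i k x x :=
  fun ⟨_, _, hne⟩ => hne rfl

variable [NeZero p] {b : Fin m → ZMod p}

theorem incompat_of_mem_Ssol_of_ne {i : Fin m} {x y : Fin n → ZMod p} (hx : x ∈ Ssol A b i)
    (hy : y ∈ Ssol A b i) (hxy : x ≠ y) : Incompat A i i x y := by
  obtain ⟨j, hj⟩ := Function.ne_iff.mp hxy
  have hjV : j ∈ Vset A i := by
    by_contra hjV
    have hx0 : x j = 0 := not_imp_comm.mp ((Finset.mem_filter.mp hx).2.2 j) hjV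
    have hy0 : y j = 0 := not_imp_comm.mp ((Finset.mem_filter.mp hy).2.2 j) hjV
    exact hj (hx0.trans hy0.symm)
  exact ⟨j, Finset.mem_inter.mpr ⟨hjV, hjV⟩, hj⟩

variable (A b)

def psiGen (g : SyncGen A b) : IsoAlg (lsGraph A b) (lsGraph A (0 : Fin m → ZMod p)) :=
  ∑ k : Fin m, egen (lsGraph A b) (lsGraph A 0) (Sum.inl g) (Sum.inr ⟨k, ⟨0, zero_mem_Ssol A k⟩⟩)

theorem psiGen_isStarProjection (g : SyncGen A b) : IsStarProjection (psiGen A b g) :=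
  IsStarProjection.finsetSum (fun _ _ => egen_isStarProjection _ _ _ _)
    fun _ _ _ _ hkl => egen_mul_egen_of_ne_output _ fun h =>
      hkl (congrArg Sigma.fst (Sum.inr_injective h))

variable {A b}

theorem psiGen_mul_psiGen_of_incompat {g g' : SyncGen A b}
    (h : Incompat A g.1 g'.1 g.2.1 g'.2.1) : psiGen A b g * psiGen A b g' = 0 := by
  rw [psiGen, psiGen, Finset.sum_mul_sum]
  refine Finset.sum_eq_zero fun k _ => Finset.sum_eq_zero fun l _ => ?_
  by_cases hkl : k = l
  · subst hkl
    refine egen_mul_egen_of_ne_input _ fun hgg' => ?_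
    cases Sum.inl_injective hgg'
    exact not_incompat_self _ _ _ h
  · exact egen_mul_egen_of_not_isoWin fun hwin => not_incompat_self k l 0 (hwin.2.mp h)

theorem sum_psiGen_row (hered : IsHereditary (IsoAlg (lsGraph A b) (lsGraph A 0))) (i : Fin m) :
    ∑ x ∈ (Ssol A b i).attach, psiGen A b ⟨i, x⟩ = 1 := by
  refine hered.eq_one_of_sum_eq_card (q := fun i => ∑ x ∈ (Ssol A b i).attach, psiGen A b ⟨i, x⟩)
    (fun i => ?_) ?_ i
  · exact IsStarProjection.finsetSum (fun x _ => psiGen_isStarProjection A b _)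
      fun x _ y _ hxy => psiGen_mul_psiGen_of_incompat
        (incompat_of_mem_Ssol_of_ne x.2 y.2 (Subtype.coe_ne_coe.mpr hxy))
  · have hcol (k : Fin m) : ∑ g : SyncGen A b,
        egen (lsGraph A b) (lsGraph A 0) (Sum.inl g) (Sum.inr ⟨k, ⟨0, zero_mem_Ssol A k⟩⟩) = 1 := by
      rw [← sum_egen_input _ _ hered, Fintype.sum_sum_type,
        Finset.sum_eq_zero fun _ _ => egen_inr_inr _ _, add_zero]
    calc ∑ i, ∑ x ∈ (Ssol A b i).attach, psiGen A b ⟨i, x⟩ = ∑ g, psiGen A b g :=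
          (Fintype.sum_sigma _).symm
      _ = ∑ _k : Fin m, 1 := by
          simp only [psiGen]
          rw [Finset.sum_comm]
          exact Finset.sum_congr rfl fun k _ => hcol k

end LinearSystemGraph

/-- If the game algebra `𝒜(Iso(G_{A,b},G_{A,0}))` is hereditary, then
there is a unital `*`-homomorphism `ψ : 𝒜(syncLCS(A,b)) → 𝒜(Iso(G_{A,b},G_{A,0}))` with
`ψ(a_{i,x}) = ∑_{k=1}^m e_{(i,x),(k,0)}`. -/
theorem statement19 (p : ℕ) [Fact p.Prime] {m n : ℕ} (A : Matrix (Fin m) (Fin n) (ZMod p))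
    (b : Fin m → ZMod p)
    (hered : ∀ (N : ℕ) (xs : Fin N → IsoAlg (lsGraph A b) (lsGraph A (0 : Fin m → ZMod p))),
      ∑ i, star (xs i) * xs i = 0 → ∀ i, xs i = 0) :
    ∃ ψ : GameAlg A b →⋆ₐ[ℂ] IsoAlg (lsGraph A b) (lsGraph A (0 : Fin m → ZMod p)),
      ∀ (i : Fin m) (x : Fin n → ZMod p) (hx : x ∈ Ssol A b i),
        ψ (agen A b i x hx) =
          ∑ k : Fin m, egen (lsGraph A b) (lsGraph A (0 : Fin m → ZMod p))
            (Sum.inl ⟨i, ⟨x, hx⟩⟩) (Sum.inr ⟨k, ⟨0, zero_mem_Ssol A k⟩⟩) :=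
  ⟨GameAlg.lift (psiGen A b) (psiGen_isStarProjection A b) (sum_psiGen_row hered)
      fun _ _ => psiGen_mul_psiGen_of_incompat,
    GameAlg.lift_agen _ _ _ _⟩

end
end
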